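/- (Proposition, part (i)) Assume p_M > 0 for all M ∈ D_I. If b ∈ A(ι(I)) satisfies B_φ(a, b) = φ(ab) = 0 for all a ∈ A(I), then b = 0. -/

import Mathlib

/-!
An operator `b ∈ A(J)` acts only on the modes in `J`: its matrix element between
`f_{T ∪ R}` and `f_{T' ∪ R'}` (with `T, T' ⊆ J` and `R, R'` disjoint from `J`) vanishes unless
`R = R'`, and otherwise equals `⟨f_{T'}, b f_T⟩` up to a Jordan–Wigner sign (`IsLocal`); this
property holds for the generators `a_j` and survives the *-algebra operations.

Up to nonzero factors, `Φ = Σ_S q_S f_{S ∪ ι(S)}` with every `q_S ≠ 0`. For `S, S' ⊆ I` the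
element `t = a*(S') a(I) a*(I \ S)` of `A(I)` maps `Φ` to a nonzero multiple of
`f_{ι(S) ∪ S'}`, so `φ(t* b) = ⟨tΦ, bΦ⟩ = 0` kills that coefficient of `bΦ`. By locality the
coefficient is a nonzero multiple of `⟨f_{ι(S)}, b f_{ι(S')}⟩`, so all matrix elements of `b`
between states supported in `J = ι(I)` vanish, and locality again gives `b = 0`.
-/

noncomputable section
open scoped InnerProductSpace ComplexConjugate
open ContinuousLinearMap

namespace Fermion

variable (L : Type) [Fintype L] [LinearOrder L]

/-- The fermionic Fock space over the one-particle space `h = ℓ²(L)`, realized concretely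
via its orthonormal basis indexed by the finite subsets of `L` (the vectors `f_M`). -/
abbrev FockSpace := EuclideanSpace ℂ (Finset L)

variable {L}

/-- The vacuum vector `Ψ = f_∅`. -/
def vac : FockSpace L := EuclideanSpace.single ∅ 1

/-- Jordan–Wigner sign factor. -/
def jwSign (l : L) (S : Finset L) : ℂ := (-1 : ℂ) ^ (S.filter (fun k => k < l)).card

/-- The creation operator `a*_l = a*(e_l)`. -/
def cre (l : L) : FockSpace L →L[ℂ] FockSpace L :=
  LinearMap.toContinuousLinearMap <|
    (EuclideanSpace.basisFun (Finset L) ℂ).toBasis.constr ℂ fun S =>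
      if l ∈ S then 0 else jwSign l S • EuclideanSpace.single (insert l S) 1

/-- The annihilation operator `a_l = a(e_l)`. -/
def ann (l : L) : FockSpace L →L[ℂ] FockSpace L := ContinuousLinearMap.adjoint (cre l)

/-- The vector `f_{(l_1,…,l_n)} = a*_{l_1} ⋯ a*_{l_n} Ψ  (= P (e_{l_1} ⊗ ⋯ ⊗ e_{l_n}))`. -/
def fvec (M : List L) : FockSpace L := M.foldr (fun l v => cre l v) vac

/-- The algebra `A(I)` : the unital *-subalgebra of `B(H)` generated by `{a_l : l ∈ I}`. -/
def A (I : Finset L) : StarSubalgebra ℂ (FockSpace L →L[ℂ] FockSpace L) :=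
  StarAlgebra.adjoin ℂ (ann '' (I : Set L))

/-- The trace on `B(H)`. -/
def Tr (T : FockSpace L →L[ℂ] FockSpace L) : ℂ := LinearMap.trace ℂ (FockSpace L) T

/-- The rank-one operator `|x⟩⟨y|`. -/
def ketbra (x y : FockSpace L) : FockSpace L →L[ℂ] FockSpace L :=
  (ContinuousLinearMap.toSpanSingleton ℂ x).comp (innerSL ℂ y)

/-- A valid choice of `D_I`: `D S` enumerates the finite set `S` without repetitions. -/
def IsEnum (D : Finset L → List L) : Prop := ∀ S : Finset L, (D S).Nodup ∧ (D S).toFinset = S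

/-- The entangled vector `Φ = Σ_{M ∈ D_I} p_M^{1/2} f_{M ι(M)}`. -/
def Phi (D : Finset L → List L) (p : Finset L → ℝ) (I : Finset L) (ι : L → L) : FockSpace L :=
  ∑ S ∈ I.powerset, (Real.sqrt (p S) : ℂ) • fvec (D S ++ (D S).map ι)

/-- The state `φ(x) = ⟨Φ, xΦ⟩`. -/
def phi (D : Finset L → List L) (p : Finset L → ℝ) (I : Finset L) (ι : L → L)
    (x : FockSpace L →L[ℂ] FockSpace L) : ℂ :=
  ⟪Phi D p I ι, x (Phi D p I ι)⟫_ℂ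

section Signs

omit [Fintype L]

lemma jwSign_mul_self (l : L) (S : Finset L) : jwSign l S * jwSign l S = 1 := by
  rw [jwSign, ← mul_pow, neg_one_mul, neg_neg, one_pow]

lemma jwSign_ne_zero (l : L) (S : Finset L) : jwSign l S ≠ 0 :=
  left_ne_zero_of_mul_eq_one (jwSign_mul_self l S)

lemma conj_jwSign (l : L) (S : Finset L) : conj (jwSign l S) = jwSign l S := by
  simp [jwSign]

lemma jwSign_union (l : L) {S T : Finset L} (h : Disjoint S T) :
    jwSign l (S ∪ T) = jwSign l S * jwSign l T := by
  rw [jwSign, jwSign, jwSign, Finset.filter_union,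
    Finset.card_union_of_disjoint (Finset.disjoint_filter_filter h), pow_add]

def jwSignProd (T R : Finset L) : ℂ := ∏ j ∈ T, jwSign j R

lemma jwSignProd_mul_self (T R : Finset L) : jwSignProd T R * jwSignProd T R = 1 := by
  rw [jwSignProd, ← Finset.prod_mul_distrib]
  exact Finset.prod_eq_one fun j _ => jwSign_mul_self j R

lemma jwSignProd_ne_zero (T R : Finset L) : jwSignProd T R ≠ 0 :=
  left_ne_zero_of_mul_eq_one (jwSignProd_mul_self T R)

lemma conj_jwSignProd (T R : Finset L) : conj (jwSignProd T R) = jwSignProd T R := by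
  simp [jwSignProd, conj_jwSign]

lemma jwSignProd_empty_right (T : Finset L) : jwSignProd T ∅ = 1 := by
  simp [jwSignProd, jwSign]

lemma jwSignProd_mul_jwSignProd_erase {j : L} {T : Finset L} (hj : j ∈ T) (R : Finset L) :
    jwSignProd T R * jwSignProd (T.erase j) R = jwSign j R := by
  rw [jwSignProd, ← Finset.mul_prod_erase T _ hj, mul_assoc, ← jwSignProd, jwSignProd_mul_self,
    mul_one]

end Signs

section Decomposition

omit [Fintype L]

variable {J T T' R R' : Finset L}

lemma union_inter_eq_of_subset_of_disjoint (hT : T ⊆ J) (hR : Disjoint R J) :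
    (T ∪ R) ∩ J = T := by
  rw [Finset.union_inter_distrib_right, Finset.inter_eq_left.mpr hT,
    Finset.disjoint_iff_inter_eq_empty.mp hR, Finset.union_empty]

lemma union_sdiff_eq_of_subset_of_disjoint (hT : T ⊆ J) (hR : Disjoint R J) :
    (T ∪ R) \ J = R := by
  rw [Finset.union_sdiff_distrib, Finset.sdiff_eq_empty_iff_subset.mpr hT,
    Finset.sdiff_eq_self_of_disjoint hR, Finset.empty_union]

lemma union_eq_union_iff_of_subset_of_disjoint (hT : T ⊆ J) (hT' : T' ⊆ J) (hR : Disjoint R J)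
    (hR' : Disjoint R' J) : T' ∪ R' = T ∪ R ↔ T' = T ∧ R' = R := by
  refine ⟨fun h => ⟨?_, ?_⟩, fun ⟨h₁, h₂⟩ => h₁ ▸ h₂ ▸ rfl⟩
  · rw [← union_inter_eq_of_subset_of_disjoint hT' hR', h,
      union_inter_eq_of_subset_of_disjoint hT hR]
  · rw [← union_sdiff_eq_of_subset_of_disjoint hT' hR', h,
      union_sdiff_eq_of_subset_of_disjoint hT hR]

lemma exists_subset_disjoint_union_eq (J Y : Finset L) :
    ∃ T R, T ⊆ J ∧ Disjoint R J ∧ T ∪ R = Y :=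
  ⟨Y ∩ J, Y \ J, Finset.inter_subset_right, Finset.sdiff_disjoint, sup_inf_sdiff Y J⟩

end Decomposition

def basisVec (X : Finset L) : FockSpace L := EuclideanSpace.single X 1

lemma inner_basisVec_left (X : Finset L) (v : FockSpace L) : ⟪basisVec X, v⟫_ℂ = v X := by
  simp [basisVec, EuclideanSpace.inner_single_left]

omit [Fintype L] in
lemma basisVec_apply (X Y : Finset L) : basisVec X Y = if Y = X then 1 else 0 :=
  PiLp.single_apply 2 ℂ X 1 Y

lemma inner_basisVec_basisVec (X Y : Finset L) :
    ⟪basisVec X, basisVec Y⟫_ℂ = if X = Y then 1 else 0 := by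
  rw [inner_basisVec_left, basisVec_apply]

lemma ext_basisVec {f g : FockSpace L →L[ℂ] FockSpace L}
    (h : ∀ X, f (basisVec X) = g (basisVec X)) : f = g :=
  ContinuousLinearMap.coe_injective <|
    (EuclideanSpace.basisFun (Finset L) ℂ).toBasis.ext fun X => by
      simpa [basisVec, EuclideanSpace.basisFun_apply] using h X

lemma cre_basisVec (l : L) (X : Finset L) :
    cre l (basisVec X) = if l ∈ X then 0 else jwSign l X • basisVec (insert l X) := by
  have hX : basisVec X = (EuclideanSpace.basisFun (Finset L) ℂ).toBasis X := by
    simp [basisVec, EuclideanSpace.basisFun_apply]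
  rw [cre, LinearMap.coe_toContinuousLinearMap', hX, Module.Basis.constr_basis]
  rfl

lemma ann_basisVec (l : L) (X : Finset L) :
    ann l (basisVec X) = if l ∈ X then jwSign l (X.erase l) • basisVec (X.erase l) else 0 := by
  ext Y
  rw [← inner_basisVec_left, ann, adjoint_inner_right, cre_basisVec]
  by_cases hlY : l ∈ Y
  · have hY : Y ≠ X.erase l := fun h => Finset.notMem_erase l X (h ▸ hlY)
    split_ifs <;> simp [basisVec_apply, hY]
  · have key : insert l Y = X ↔ l ∈ X ∧ Y = X.erase l := by
      constructor
      · rintro rfl; simp [hlY]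
      · rintro ⟨h1, rfl⟩; simp [h1]
    split_ifs with h <;>
      simp [inner_smul_left, inner_basisVec_basisVec, basisVec_apply, key, h, conj_jwSign]
    split_ifs with hY <;> simp [hY]

lemma inner_basisVec_union_basisVec_union {J T T' R R' : Finset L} (hT : T ⊆ J) (hT' : T' ⊆ J)
    (hR : Disjoint R J) (hR' : Disjoint R' J) :
    ⟪basisVec (T' ∪ R'), basisVec (T ∪ R)⟫_ℂ = if T' = T ∧ R' = R then 1 else 0 := by
  simp only [inner_basisVec_basisVec, union_eq_union_iff_of_subset_of_disjoint hT hT' hR hR']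

def IsLocal (J : Finset L) (b : FockSpace L →L[ℂ] FockSpace L) : Prop :=
  ∀ ⦃T T' R R' : Finset L⦄, T ⊆ J → T' ⊆ J → Disjoint R J → Disjoint R' J →
    ⟪basisVec (T' ∪ R'), b (basisVec (T ∪ R))⟫_ℂ =
      if R' = R then jwSignProd T R * jwSignProd T' R * ⟪basisVec T', b (basisVec T)⟫_ℂ else 0

namespace IsLocal

variable {J : Finset L} {x y : FockSpace L →L[ℂ] FockSpace L}

lemma apply_basisVec_union (hy : IsLocal J y) {T R : Finset L} (hT : T ⊆ J)
    (hR : Disjoint R J) :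
    y (basisVec (T ∪ R)) = ∑ T' ∈ J.powerset,
      (jwSignProd T R * jwSignProd T' R * ⟪basisVec T', y (basisVec T)⟫_ℂ) •
        basisVec (T' ∪ R) := by
  ext Y
  obtain ⟨T₀, R₀, hT₀, hR₀, rfl⟩ := exists_subset_disjoint_union_eq J Y
  rw [← inner_basisVec_left, ← inner_basisVec_left, hy hT hT₀ hR hR₀, inner_sum,
    Finset.sum_eq_single_of_mem T₀ (Finset.mem_powerset.mpr hT₀)]
  · rw [inner_smul_right, inner_basisVec_union_basisVec_union hT₀ hT₀ hR hR₀]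
    simp
  · intro T' hT' hne
    rw [inner_smul_right,
      inner_basisVec_union_basisVec_union (Finset.mem_powerset.mp hT') hT₀ hR hR₀,
      if_neg fun h => hne h.1.symm, mul_zero]

lemma eq_zero (hb : IsLocal J x)
    (h : ∀ T ⊆ J, ∀ T' ⊆ J, ⟪basisVec T', x (basisVec T)⟫_ℂ = 0) : x = 0 := by
  refine ext_basisVec fun X => ?_
  ext Y
  obtain ⟨T, R, hT, hR, rfl⟩ := exists_subset_disjoint_union_eq J X
  obtain ⟨T', R', hT', hR', rfl⟩ := exists_subset_disjoint_union_eq J Y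
  rw [← inner_basisVec_left, hb hT hT' hR hR', h T hT T' hT']
  simp

lemma add (hx : IsLocal J x) (hy : IsLocal J y) : IsLocal J (x + y) := by
  intro T T' R R' hT hT' hR hR'
  simp only [add_apply, inner_add_right, hx hT hT' hR hR', hy hT hT' hR hR']
  split_ifs <;> ring

lemma algebraMap (r : ℂ) : IsLocal J (algebraMap ℂ (FockSpace L →L[ℂ] FockSpace L) r) := by
  intro T T' R R' hT hT' hR hR'
  rw [Algebra.algebraMap_eq_smul_one, smul_apply, smul_apply, one_apply_eq_self, one_apply_eq_self,
    inner_smul_right, inner_smul_right, inner_basisVec_union_basisVec_union hT hT' hR hR',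
    inner_basisVec_basisVec]
  by_cases hTT : T' = T
  · subst hTT
    by_cases hRR : R' = R <;> simp [hRR, jwSignProd_mul_self]
  · simp [hTT]

lemma star (hx : IsLocal J x) : IsLocal J (star x) := by
  intro T T' R R' hT hT' hR hR'
  rw [star_eq_adjoint, adjoint_inner_right, adjoint_inner_right, ← inner_conj_symm,
    hx hT' hT hR' hR, ← inner_conj_symm (basisVec T)]
  split_ifs with h₁ h₂ h₂
  · subst h₁
    simp [conj_jwSignProd, mul_comm]
  · exact absurd h₁.symm h₂
  · exact absurd h₂.symm h₁
  · simp

lemma mul (hx : IsLocal J x) (hy : IsLocal J y) : IsLocal J (x * y) := by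
  intro T T' R R' hT hT' hR hR'
  have hxyT : ⟪basisVec T', x (y (basisVec T))⟫_ℂ =
      ∑ T'' ∈ J.powerset,
        ⟪basisVec T'', y (basisVec T)⟫_ℂ * ⟪basisVec T', x (basisVec T'')⟫_ℂ := by
    have hyT := hy.apply_basisVec_union hT (Finset.disjoint_empty_left J)
    simp only [Finset.union_empty, jwSignProd_empty_right, one_mul] at hyT
    conv_lhs => rw [hyT]
    simp only [map_sum, map_smul, inner_sum, inner_smul_right]
  rw [mul_apply_eq_comp, mul_apply_eq_comp, hxyT, hy.apply_basisVec_union hT hR, map_sum,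
    inner_sum, Finset.mul_sum]
  split_ifs with hRR
  · subst hRR
    refine Finset.sum_congr rfl fun T'' hT'' => ?_
    rw [map_smul, inner_smul_right, hx (Finset.mem_powerset.mp hT'') hT' hR hR, if_pos rfl]
    linear_combination (jwSignProd T R' * jwSignProd T' R' * ⟪basisVec T'', y (basisVec T)⟫_ℂ *
      ⟪basisVec T', x (basisVec T'')⟫_ℂ) * jwSignProd_mul_self T'' R'
  · refine Finset.sum_eq_zero fun T'' hT'' => ?_
    rw [map_smul, inner_smul_right, hx (Finset.mem_powerset.mp hT'') hT' hR hR', if_neg hRR,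
      mul_zero]

end IsLocal

lemma isLocal_ann {J : Finset L} {j : L} (hj : j ∈ J) : IsLocal J (ann j) := by
  intro T T' R R' hT hT' hR hR'
  have hjR : j ∉ R := Finset.disjoint_right.mp hR hj
  by_cases hjT : j ∈ T
  · have herase : (T ∪ R).erase j = T.erase j ∪ R := by
      rw [Finset.erase_union_distrib, Finset.erase_eq_of_notMem hjR]
    have hTR : Disjoint (T.erase j) R :=
      (hR.symm.mono_left hT).mono_left (Finset.erase_subset j T)
    rw [ann_basisVec, if_pos (Finset.mem_union_left R hjT), herase, jwSign_union j hTR,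
      ann_basisVec, if_pos hjT, inner_smul_right, inner_smul_right,
      inner_basisVec_union_basisVec_union ((Finset.erase_subset j T).trans hT) hT' hR hR',
      inner_basisVec_basisVec]
    by_cases hTT : T' = T.erase j
    · subst hTT
      by_cases hRR : R' = R
      · simp [hRR, ← jwSignProd_mul_jwSignProd_erase hjT R]
        ring
      · simp [hRR]
    · simp [hTT]
  · rw [ann_basisVec, if_neg (by simp [hjT, hjR]), ann_basisVec, if_neg hjT]
    simp

lemma isLocal_of_mem_A {J : Finset L} {b : FockSpace L →L[ℂ] FockSpace L} (hb : b ∈ A J) :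
    IsLocal J b := by
  induction hb using StarAlgebra.adjoin_induction with
  | mem x hx =>
    obtain ⟨j, hj, rfl⟩ := hx
    exact isLocal_ann hj
  | algebraMap r => exact IsLocal.algebraMap r
  | add x y _ _ hx hy => exact hx.add hy
  | mul x y _ _ hx hy => exact hx.mul hy
  | star x _ hx => exact hx.star

lemma ann_mem_A {I : Finset L} {l : L} (hl : l ∈ I) : ann l ∈ A I :=
  StarAlgebra.subset_adjoin ℂ _ ⟨l, hl, rfl⟩

lemma cre_mem_A {I : Finset L} {l : L} (hl : l ∈ I) : cre l ∈ A I := by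
  simpa [star_eq_adjoint, ann] using star_mem (ann_mem_A hl)

def creProd (M : List L) : FockSpace L →L[ℂ] FockSpace L := (M.map cre).prod

def annProd (M : List L) : FockSpace L →L[ℂ] FockSpace L := (M.map ann).prod

lemma creProd_mem_A {I : Finset L} {M : List L} (hM : ∀ l ∈ M, l ∈ I) : creProd M ∈ A I :=
  list_prod_mem <| by simpa using fun l hl => cre_mem_A (hM l hl)

lemma annProd_mem_A {I : Finset L} {M : List L} (hM : ∀ l ∈ M, l ∈ I) : annProd M ∈ A I :=
  list_prod_mem <| by simpa using fun l hl => ann_mem_A (hM l hl)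

lemma creProd_basisVec (M : List L) (X : Finset L) :
    ∃ c : ℂ, creProd M (basisVec X) = c • basisVec (X ∪ M.toFinset) ∧
      (c ≠ 0 ↔ M.Nodup ∧ Disjoint M.toFinset X) := by
  induction M with
  | nil => exact ⟨1, by simp [creProd], by simp⟩
  | cons l M ih =>
    obtain ⟨c, hc, hc0⟩ := ih
    refine ⟨if l ∈ X ∪ M.toFinset then 0 else jwSign l (X ∪ M.toFinset) * c, ?_, ?_⟩
    · rw [creProd, List.map_cons, List.prod_cons, mul_apply_eq_comp, ← creProd, hc, map_smul,
        cre_basisVec]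
      split_ifs <;> simp [smul_smul, mul_comm, Finset.union_insert]
    · split_ifs with h <;> simp_all [jwSign_ne_zero]
      tauto

lemma annProd_basisVec (M : List L) (X : Finset L) :
    ∃ c : ℂ, annProd M (basisVec X) = c • basisVec (X \ M.toFinset) ∧
      (c ≠ 0 ↔ M.Nodup ∧ M.toFinset ⊆ X) := by
  induction M with
  | nil => exact ⟨1, by simp [annProd], by simp⟩
  | cons l M ih =>
    obtain ⟨c, hc, hc0⟩ := ih
    refine ⟨if l ∈ X \ M.toFinset then jwSign l (X \ (l :: M).toFinset) * c else 0, ?_, ?_⟩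
    · rw [annProd, List.map_cons, List.prod_cons, mul_apply_eq_comp, ← annProd, hc, map_smul,
        ann_basisVec]
      have : (X \ M.toFinset).erase l = X \ (l :: M).toFinset := by
        ext; simp; tauto
      split_ifs <;> simp [smul_smul, mul_comm, this]
    · split_ifs with h <;> simp_all [jwSign_ne_zero, Finset.insert_subset_iff]
      tauto

lemma fvec_eq_creProd (M : List L) : fvec M = creProd M vac := by
  induction M with
  | nil => simp [fvec, creProd]
  | cons l M ih =>
    rw [creProd, List.map_cons, List.prod_cons, mul_apply_eq_comp, ← creProd, ← ih]
    rfl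

lemma fvec_eq_smul (M : List L) :
    ∃ c : ℂ, fvec M = c • basisVec M.toFinset ∧ (c ≠ 0 ↔ M.Nodup) := by
  obtain ⟨c, hc, hc0⟩ := creProd_basisVec M ∅
  exact ⟨c, by rw [fvec_eq_creProd]; exact hc, by simpa using hc0⟩

omit [Fintype L] in
lemma IsEnum.nodup_append_map {D : Finset L → List L} (hD : IsEnum D) {I : Finset L}
    {ι : L → L} (hinj : Set.InjOn ι I) (hIJ : Disjoint I (I.image ι)) {S : Finset L}
    (hS : S ⊆ I) : (D S ++ (D S).map ι).Nodup := by
  have hmem : ∀ x ∈ D S, x ∈ I := fun x hx => hS ((hD S).2 ▸ List.mem_toFinset.mpr hx)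
  refine List.nodup_append.mpr ⟨(hD S).1,
    (hD S).1.map_on fun x hx y hy => hinj (hmem x hx) (hmem y hy), ?_⟩
  intro x hx z hz
  obtain ⟨y, hy, rfl⟩ := List.mem_map.mp hz
  rintro rfl
  exact Finset.disjoint_left.mp hIJ (hmem _ hx) (Finset.mem_image_of_mem ι (hmem y hy))

def entangledVec (I : Finset L) (ι : L → L) (q : Finset L → ℂ) : FockSpace L :=
  ∑ S ∈ I.powerset, q S • basisVec (S ∪ S.image ι)

lemma exists_Phi_eq_entangledVec {I : Finset L} {ι : L → L} (hinj : Set.InjOn ι I)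
    (hIJ : Disjoint I (I.image ι)) {D : Finset L → List L} (hD : IsEnum D) {p : Finset L → ℝ}
    (hp : ∀ S ∈ I.powerset, 0 < p S) :
    ∃ q : Finset L → ℂ, (∀ S ∈ I.powerset, q S ≠ 0) ∧ Phi D p I ι = entangledVec I ι q := by
  choose c hc hc0 using fun S => fvec_eq_smul (D S ++ (D S).map ι)
  refine ⟨fun S => Real.sqrt (p S) * c S, fun S hS => mul_ne_zero ?_ ((hc0 S).mpr ?_), ?_⟩
  · exact_mod_cast (Real.sqrt_pos.mpr (hp S hS)).ne'
  · exact hD.nodup_append_map hinj hIJ (Finset.mem_powerset.mp hS)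
  · refine Finset.sum_congr rfl fun S _ => ?_
    rw [hc, smul_smul]
    congr 2
    conv_rhs => rw [← (hD S).2]
    ext
    simp

def transfer (I S S' : Finset L) : FockSpace L →L[ℂ] FockSpace L :=
  creProd S'.toList * annProd I.toList * creProd (I \ S).toList

lemma transfer_mem_A {I S S' : Finset L} (hS' : S' ⊆ I) : transfer I S S' ∈ A I := by
  refine mul_mem (mul_mem (creProd_mem_A ?_) (annProd_mem_A ?_)) (creProd_mem_A ?_)
  · exact fun l hl => hS' (Finset.mem_toList.mp hl)
  · exact fun l hl => Finset.mem_toList.mp hl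
  · exact fun l hl => (Finset.mem_sdiff.mp (Finset.mem_toList.mp hl)).1

/-- `a*(I \ S)` kills the vector unless `R ⊆ S`, and `a(I)` then kills it unless `S ⊆ R`. -/
lemma exists_transfer_apply_basisVec {I S S' R : Finset L} {ι : L → L}
    (hIJ : Disjoint I (I.image ι)) (hS : S ⊆ I) (hS' : S' ⊆ I) (hR : R ⊆ I) :
    ∃ c : ℂ, transfer I S S' (basisVec (R ∪ R.image ι)) = c • basisVec (R.image ι ∪ S') ∧
      (c ≠ 0 ↔ R = S) := by
  have hRι : Disjoint I (R.image ι) := hIJ.mono_right (Finset.image_subset_image hR)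
  obtain ⟨c₁, h₁, hc₁⟩ := creProd_basisVec (I \ S).toList (R ∪ R.image ι)
  obtain ⟨c₂, h₂, hc₂⟩ := annProd_basisVec I.toList (R ∪ R.image ι ∪ (I \ S))
  obtain ⟨c₃, h₃, hc₃⟩ := creProd_basisVec S'.toList (R.image ι)
  simp only [Finset.toList_toFinset, Finset.nodup_toList, true_and] at h₁ hc₁ h₂ hc₂ h₃ hc₃
  have hset : (R ∪ R.image ι ∪ (I \ S)) \ I = R.image ι := by
    simp only [Finset.disjoint_left, Finset.subset_iff, Finset.ext_iff, Finset.mem_union,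
      Finset.mem_sdiff] at hR hRι ⊢
    grind
  refine ⟨c₁ * c₂ * c₃, ?_, ?_⟩
  · rw [transfer, mul_apply_eq_comp, mul_apply_eq_comp, h₁, map_smul, h₂, hset, map_smul,
      map_smul, h₃, smul_smul, smul_smul]
  · rw [mul_ne_zero_iff, mul_ne_zero_iff, hc₁, hc₂, hc₃]
    simp only [Finset.disjoint_left, Finset.subset_iff, Finset.ext_iff, Finset.mem_union,
      Finset.mem_sdiff] at hS hS' hR hRι ⊢
    grind

lemma exists_transfer_apply_entangledVec {I : Finset L} {ι : L → L}
    (hIJ : Disjoint I (I.image ι)) {q : Finset L → ℂ} (hq : ∀ S ∈ I.powerset, q S ≠ 0)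
    {S S' : Finset L} (hS : S ⊆ I) (hS' : S' ⊆ I) :
    ∃ c : ℂ, c ≠ 0 ∧ transfer I S S' (entangledVec I ι q) = c • basisVec (S.image ι ∪ S') := by
  obtain ⟨c, hc, hc0⟩ := exists_transfer_apply_basisVec hIJ hS hS' hS
  refine ⟨q S * c, mul_ne_zero (hq S (Finset.mem_powerset.mpr hS)) (hc0.mpr rfl), ?_⟩
  rw [entangledVec, map_sum, Finset.sum_eq_single_of_mem S (Finset.mem_powerset.mpr hS),
    map_smul, hc, smul_smul]
  intro R hR hne
  obtain ⟨c', hc', hc0'⟩ := exists_transfer_apply_basisVec hIJ hS hS' (Finset.mem_powerset.mp hR)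
  rw [map_smul, hc', not_ne_iff.mp (mt hc0'.mp hne), zero_smul, smul_zero]

lemma IsLocal.eq_zero_of_inner_apply_entangledVec {I : Finset L} {ι : L → L}
    {b : FockSpace L →L[ℂ] FockSpace L} (hb : IsLocal (I.image ι) b)
    (hIJ : Disjoint I (I.image ι)) {q : Finset L → ℂ} (hq : ∀ S ∈ I.powerset, q S ≠ 0)
    (h : ∀ S ⊆ I, ∀ S' ⊆ I, ⟪basisVec (S.image ι ∪ S'), b (entangledVec I ι q)⟫_ℂ = 0) :
    b = 0 := by
  refine hb.eq_zero fun T hT T' hT' => ?_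
  obtain ⟨S', hS', rfl⟩ := Finset.subset_image_iff.mp hT
  obtain ⟨S, hS, rfl⟩ := Finset.subset_image_iff.mp hT'
  have hlocal : ∀ R ⊆ I, ⟪basisVec (S.image ι ∪ S'), b (basisVec (R ∪ R.image ι))⟫_ℂ =
      if S' = R then jwSignProd (R.image ι) R * jwSignProd (S.image ι) R *
        ⟪basisVec (S.image ι), b (basisVec (R.image ι))⟫_ℂ else 0 := fun R hR => by
    rw [Finset.union_comm R, hb (Finset.image_subset_image hR) (Finset.image_subset_image hS)
      (hIJ.mono_left hR) (hIJ.mono_left hS')]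
  have hcoeff := h S hS S' hS'
  rw [entangledVec, map_sum, inner_sum,
    Finset.sum_eq_single_of_mem S' (Finset.mem_powerset.mpr hS'), map_smul, inner_smul_right,
    hlocal S' hS', if_pos rfl] at hcoeff
  · simpa [hq S' (Finset.mem_powerset.mpr hS'), jwSignProd_ne_zero] using hcoeff
  · intro R hR hne
    rw [map_smul, inner_smul_right, hlocal R (Finset.mem_powerset.mp hR), if_neg (Ne.symm hne),
      mul_zero]

theorem nondegenerate_left_general
    {L : Type} [Fintype L] [LinearOrder L]
    (I J : Finset L) (ι : L → L)
    (hinj : Set.InjOn ι (I : Set L)) (himg : I.image ι = J) (hIJ : Disjoint I J)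
    (D : Finset L → List L) (hD : IsEnum D)
    (p : Finset L → ℝ)
    (hppos : ∀ S ∈ I.powerset, 0 < p S)
    (b : FockSpace L →L[ℂ] FockSpace L) (hb : b ∈ A (I.image ι))
    (h : ∀ a ∈ A I, phi D p I ι (a * b) = 0) :
    b = 0 := by
  subst himg
  obtain ⟨q, hq, hPhi⟩ := exists_Phi_eq_entangledVec hinj hIJ hD hppos
  refine (isLocal_of_mem_A hb).eq_zero_of_inner_apply_entangledVec hIJ hq fun S hS S' hS' => ?_
  obtain ⟨c, hc, htΦ⟩ := exists_transfer_apply_entangledVec hIJ hq hS hS' (ι := ι)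
  have hφ := h (star (transfer I S S')) (star_mem (transfer_mem_A hS'))
  rw [phi, hPhi, mul_apply_eq_comp, star_eq_adjoint, adjoint_inner_right, htΦ,
    inner_smul_left] at hφ
  exact (mul_eq_zero.mp hφ).resolve_left (by simpa using hc)

/-- Proposition, part (i). Assume `p_M > 0` for all `M ∈ D_I`.
If `b ∈ A(ι(I))` satisfies `B_φ(a, b) = φ(ab) = 0` for all `a ∈ A(I)`, then `b = 0`. -/
theorem nondegenerate_left
    {L : Type} [Fintype L] [LinearOrder L]
    (I J : Finset L) (ι : L → L)
    (hinj : Set.InjOn ι (I : Set L)) (himg : I.image ι = J) (hIJ : Disjoint I J)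
    (D : Finset L → List L) (hD : IsEnum D)
    (p : Finset L → ℝ)
    (hppos : ∀ S ∈ I.powerset, 0 < p S) (hp1 : ∑ S ∈ I.powerset, p S = 1)
    (b : FockSpace L →L[ℂ] FockSpace L) (hb : b ∈ A (I.image ι))
    (h : ∀ a ∈ A I, phi D p I ι (a * b) = 0) :
    b = 0 :=
  nondegenerate_left_general I J ι hinj himg hIJ D hD p hppos b hb h

end Fermion
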